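/- arXiv:0904.0157 — 2 statements merged into one kernel-verified Lean document; each statement's English description precedes it below -/
import Mathlib

section
/- Let Ω = Ω_1 × ⋯ × Ω_k be a product of finite sets and μ a pairwise independent probability distribution on Ω with marginals μ_i of full support. Let T ⊆ [k] with 1 ≤ |T| ≤ 2. Suppose g_i : Ω_i^n → ℂ for i ∉ T are functions not depending on the first coordinate, and for i ∈ T the functions h_i : Ω_i^n → ℂ satisfy E_{x_1 ∼ μ_i}[h_i(x_1, x_2, …, x_n)] = 0 for every fixed (x_2, …, x_n) (equivalently, ĥ_i(σ) = 0 whenever σ_1 = 0). Then E_X[∏_{i ∉ T} g_i(X_i) · ∏_{i ∈ T} h_i(X_i)] = 0, where X is a random k × n matrix whose columns are i.i.d. samples from μ and X_i is its i-th row. -/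
open Finset

/-- The marginal distribution of the `i`-th coordinate of a distribution `μ` on a
product of finite sets. -/
noncomputable def marg {k : ℕ} {Ω : Fin k → Type} [∀ i, Fintype (Ω i)]
    [∀ i, DecidableEq (Ω i)] (μ : (∀ i, Ω i) → ℝ) (i : Fin k) (a : Ω i) : ℝ :=
  ∑ x : ∀ j, Ω j, if x i = a then μ x else 0

/-- `μ` is pairwise independent: the joint distribution of any two distinct coordinates
is the product of the corresponding marginals. -/
def PairIndep {k : ℕ} {Ω : Fin k → Type} [∀ i, Fintype (Ω i)]
    [∀ i, DecidableEq (Ω i)] (μ : (∀ i, Ω i) → ℝ) : Prop :=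
  ∀ i j : Fin k, i ≠ j → ∀ (a : Ω i) (b : Ω j),
    (∑ x : ∀ l, Ω l, if x i = a ∧ x j = b then μ x else 0) = marg μ i a * marg μ j b

/-- `E[∏_i F_i(X_i)]`, where the `n` columns of the random matrix `X` are i.i.d. samples
from `μ` and `X_i` is the `i`-th row. -/
noncomputable def noiseProd {k n : ℕ} {Ω : Fin k → Type} [∀ i, Fintype (Ω i)]
    [∀ i, DecidableEq (Ω i)] (μ : (∀ i, Ω i) → ℝ)
    (f : ∀ i, (Fin n → Ω i) → ℂ) : ℂ :=
  ∑ X : Fin n → ∀ i, Ω i, (∏ j, (μ (X j) : ℂ)) * ∏ i, f i fun j => X j i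

/-!
Condition on all columns of `X` except the first. Given them, `F i` for `i ∉ T` is a constant,
and `F i` for `i ∈ T` is a function of the single entry `X i 0` with mean zero under `μ_i`.
The first column is a sample `x ∼ μ`, and for `|T| ≤ 2` pairwise independence factors
`E_x[∏_{i ∈ T} F_i]` into the product of the means, which vanishes.
-/

theorem sum_prod_mul_eq_sum_prod_mul_sum_update {ι α R : Type*} [Fintype ι] [DecidableEq ι]
    [Fintype α] [CommSemiring R] (j₀ : ι) {p : α → R} (hp : ∑ a, p a = 1)
    (Φ : (ι → α) → R) :
    ∑ X, (∏ j, p (X j)) * Φ X =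
      ∑ X, (∏ j, p (X j)) * ∑ a, p a * Φ (Function.update X j₀ a) := by
  set Ψ : (ι → α) → R := fun X => (∏ j, p (X j)) * Φ X
  have hweight : ∀ X a, (∏ j, p (X j)) * p a =
      p (X j₀) * ∏ j, p (Function.update X j₀ a j) := by
    intro X a
    have hrest : ∏ j ∈ univ.erase j₀, p (Function.update X j₀ a j) =
        ∏ j ∈ univ.erase j₀, p (X j) :=
      prod_congr rfl fun j hj => by rw [Function.update_of_ne (ne_of_mem_erase hj)]
    rw [← mul_prod_erase _ _ (mem_univ j₀), ← mul_prod_erase _ _ (mem_univ j₀),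
      Function.update_self, hrest]
    ring
  -- the involution `(X, a) ↦ (X[j₀ ↦ a], X j₀)` exchanges the old and the fresh `j₀`-th value
  let swap : Equiv.Perm ((ι → α) × α) :=
    Function.Involutive.toPerm (fun Xa => (Function.update Xa.1 j₀ Xa.2, Xa.1 j₀))
      fun Xa => by simp
  calc ∑ X, Ψ X = ∑ Xa : (ι → α) × α, p Xa.2 * Ψ Xa.1 := by
        rw [Fintype.sum_prod_type]; simp only [← sum_mul, hp, one_mul]
    _ = ∑ Xa : (ι → α) × α, p (Xa.1 j₀) * Ψ (Function.update Xa.1 j₀ Xa.2) :=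
        (Equiv.sum_comp swap fun Xa => p Xa.2 * Ψ Xa.1).symm
    _ = _ := by
        rw [Fintype.sum_prod_type]
        simp only [Ψ, mul_sum, ← mul_assoc, hweight]

section Marginals

variable {k : ℕ} {Ω : Fin k → Type} [∀ i, Fintype (Ω i)] [∀ i, DecidableEq (Ω i)]
  {μ : (∀ i, Ω i) → ℝ}

theorem sum_marg_mul (i : Fin k) (H : Ω i → ℂ) :
    ∑ a, (marg μ i a : ℂ) * H a = ∑ x, (μ x : ℂ) * H (x i) := by
  simp only [marg, Complex.ofReal_sum, apply_ite Complex.ofReal, Complex.ofReal_zero, sum_mul,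
    ite_mul, zero_mul]
  rw [sum_comm]
  simp

theorem PairIndep.sum_marg_mul_mul_sum_marg_mul (hμ : PairIndep μ) {i j : Fin k} (hij : i ≠ j)
    (H : Ω i → ℂ) (G : Ω j → ℂ) :
    (∑ a, (marg μ i a : ℂ) * H a) * ∑ b, (marg μ j b : ℂ) * G b =
      ∑ x, (μ x : ℂ) * (H (x i) * G (x j)) := by
  rw [sum_mul_sum]
  simp only [mul_mul_mul_comm _ (H _), ← Complex.ofReal_mul, ← hμ i j hij, Complex.ofReal_sum,
    apply_ite Complex.ofReal, Complex.ofReal_zero, sum_mul, ite_mul, zero_mul]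
  rw [sum_congr rfl fun a _ => sum_comm, sum_comm]
  simp [ite_and]

theorem PairIndep.sum_mul_prod_eq_prod_sum_marg_mul (hμ : PairIndep μ)
    (hμ1 : ∑ x, μ x = 1) {T : Finset (Fin k)} (hT : T.card ≤ 2) (H : ∀ i, Ω i → ℂ) :
    ∑ x, (μ x : ℂ) * ∏ i ∈ T, H i (x i) = ∏ i ∈ T, ∑ a, (marg μ i a : ℂ) * H i a := by
  obtain hT0 | hT1 | hT2 : T.card = 0 ∨ T.card = 1 ∨ T.card = 2 := by omega
  · rw [card_eq_zero.mp hT0]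
    simpa using congrArg Complex.ofReal hμ1
  · obtain ⟨i, rfl⟩ := card_eq_one.mp hT1
    simp only [prod_singleton]
    exact (sum_marg_mul i (H i)).symm
  · obtain ⟨i, j, hij, rfl⟩ := card_eq_two.mp hT2
    simp only [prod_pair hij]
    exact (hμ.sum_marg_mul_mul_sum_marg_mul hij (H i) (H j)).symm

end Marginals

theorem mixed_term_vanishes_general
    {k n : ℕ} (hn : 0 < n)
    (Ω : Fin k → Type) [∀ i, Fintype (Ω i)] [∀ i, DecidableEq (Ω i)]
    (μ : (∀ i, Ω i) → ℝ)
    (hμ1 : ∑ x : ∀ i, Ω i, μ x = 1)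
    (hpi : PairIndep μ)
    (T : Finset (Fin k)) (hT1 : 1 ≤ T.card) (hT2 : T.card ≤ 2)
    (F : ∀ i, (Fin n → Ω i) → ℂ)
    (hg : ∀ i ∉ T, ∀ x x' : Fin n → Ω i,
      (∀ j : Fin n, j ≠ ⟨0, hn⟩ → x j = x' j) → F i x = F i x')
    (hh : ∀ i ∈ T, ∀ x : Fin n → Ω i,
      ∑ a : Ω i, (marg μ i a : ℂ) * F i (Function.update x ⟨0, hn⟩ a) = 0) :
    noiseProd μ F = 0 := by
  set j₀ : Fin n := ⟨0, hn⟩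
  have hμ1ℂ : ∑ x, (μ x : ℂ) = 1 := by exact_mod_cast hμ1
  rw [noiseProd, sum_prod_mul_eq_sum_prod_mul_sum_update j₀ hμ1ℂ]
  refine sum_eq_zero fun X _ => mul_eq_zero_of_right _ ?_
  set row : ∀ i, Fin n → Ω i := fun i j => X j i
  have hrow : ∀ a i, (fun j => Function.update X j₀ a j i) = Function.update (row i) j₀ (a i) :=
    fun a i => funext (Function.apply_update (fun _ y => y i) X j₀ a)
  have hsplit : ∀ a : ∀ i, Ω i, ∏ i, F i (Function.update (row i) j₀ (a i)) =
      (∏ i ∈ T, F i (Function.update (row i) j₀ (a i))) * ∏ i ∈ Tᶜ, F i (row i) := by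
    intro a
    rw [← prod_mul_prod_compl T]
    exact congrArg _ (prod_congr rfl fun i hi =>
      hg i (mem_compl.mp hi) _ _ fun j hj => Function.update_of_ne hj _ _)
  simp only [hrow, hsplit, ← mul_assoc, ← sum_mul,
    hpi.sum_mul_prod_eq_prod_sum_marg_mul hμ1 hT2 fun i b => F i (Function.update (row i) j₀ b)]
  obtain ⟨i, hi⟩ := card_pos.mp hT1
  exact mul_eq_zero_of_left (prod_eq_zero hi (hh i hi (row i))) _

/-- **Vanishing of the mixed terms** (the `1 ≤ |T| ≤ 2` case of the key lemma).
Let `μ` be pairwise independent with full-support marginals and `T ⊆ [k]` with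
`1 ≤ |T| ≤ 2`.  If for `i ∉ T` the function `F i` does not depend on the first
coordinate, and for `i ∈ T` the function `F i` has conditional mean zero in the first
coordinate (for every fixed value of the remaining coordinates), then
`E_X[∏_{i ∉ T} F_i(X_i) · ∏_{i ∈ T} F_i(X_i)] = 0`. -/
theorem mixed_term_vanishes
    {k n : ℕ} (hn : 0 < n)
    (Ω : Fin k → Type) [∀ i, Fintype (Ω i)] [∀ i, DecidableEq (Ω i)]
    (μ : (∀ i, Ω i) → ℝ)
    (hμ0 : ∀ x, 0 ≤ μ x) (hμ1 : ∑ x : ∀ i, Ω i, μ x = 1)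
    (hfull : ∀ i a, 0 < marg μ i a)
    (hpi : PairIndep μ)
    (T : Finset (Fin k)) (hT1 : 1 ≤ T.card) (hT2 : T.card ≤ 2)
    (F : ∀ i, (Fin n → Ω i) → ℂ)
    (hg : ∀ i ∉ T, ∀ x x' : Fin n → Ω i,
      (∀ j : Fin n, j ≠ ⟨0, hn⟩ → x j = x' j) → F i x = F i x')
    (hh : ∀ i ∈ T, ∀ x : Fin n → Ω i,
      ∑ a : Ω i, (marg μ i a : ℂ) * F i (Function.update x ⟨0, hn⟩ a) = 0) :
    noiseProd μ F = 0 :=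
  mixed_term_vanishes_general hn Ω μ hμ1 hpi T hT1 hT2 F hg hh
end

section
/- Let Ω = Ω_1 × ⋯ × Ω_k be a product of finite sets and μ a probability distribution on Ω with marginals μ_i of full support. Let f_1, …, f_k be functions f_i : Ω_i^n → ℂ satisfying ‖f_i‖_k ≤ 1 and ‖f_i^{>d}‖_k ≤ ε for all i, for some integer d ≥ 0 and ε > 0. Then |⟨f_1, …, f_k⟩_μ − ⟨f_1^{≤d}, …, f_k^{≤d}⟩_μ| ≤ k·ε·(1+ε)^{k−1}, where f^{≤d} = Σ_{|σ| ≤ d} f̂(σ)χ_σ and f^{>d} = f − f^{≤d} are the low- and high-degree parts of f. -/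
open Finset ComplexConjugate

/-- The Fourier coefficient `f̂(σ) = E[f ⬝ conj χ_σ]` of `f : Ω^n → ℂ` with respect to the
weight `ν` on `Ω` (used with the product weight `ν^{⊗n}`) and the basis `χ_0, …, χ_{q-1}`. -/
noncomputable def fCoeff {Ω : Type} [Fintype Ω] {q n : ℕ} (ν : Ω → ℝ)
    (χ : Fin q → Ω → ℂ) (f : (Fin n → Ω) → ℂ) (σ : Fin n → Fin q) : ℂ :=
  ∑ x : Fin n → Ω, (∏ j, (ν (x j) : ℂ)) * (f x * conj (∏ j, χ (σ j) (x j)))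

/-- `|σ|`, the size of the support of a multi-index `σ`. -/
def suppCard {q n : ℕ} [NeZero q] (σ : Fin n → Fin q) : ℕ :=
  (Finset.univ.filter fun j => σ j ≠ 0).card

open scoped Classical in
/-- The Fourier degree of `f`: the largest `|σ|` over multi-indices `σ` with `f̂(σ) ≠ 0`. -/
noncomputable def fDeg {Ω : Type} [Fintype Ω] {q n : ℕ} [NeZero q] (ν : Ω → ℝ)
    (χ : Fin q → Ω → ℂ) (f : (Fin n → Ω) → ℂ) : ℕ :=
  (Finset.univ.filter fun σ : Fin n → Fin q => fCoeff ν χ f σ ≠ 0).sup suppCard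

/-- The `ℓ₂` norm of `f : Ω^n → ℂ` with respect to the product weight `ν^{⊗n}`. -/
noncomputable def l2norm {Ω : Type} [Fintype Ω] {n : ℕ} (ν : Ω → ℝ)
    (f : (Fin n → Ω) → ℂ) : ℝ :=
  Real.sqrt (∑ x : Fin n → Ω, (∏ j, ν (x j)) * ‖f x‖ ^ 2)

/-- The `ℓ_k` norm `(E[|f|^k])^{1/k}` of `f : Ω^n → ℂ` under the product weight `ν^{⊗n}`. -/
noncomputable def lkNorm {Ω : Type} [Fintype Ω] {n : ℕ} (ν : Ω → ℝ) (k : ℕ)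
    (f : (Fin n → Ω) → ℂ) : ℝ :=
  (∑ x : Fin n → Ω, (∏ j, ν (x j)) * ‖f x‖ ^ k) ^ ((k : ℝ)⁻¹)

/-- The low-degree part `f^{≤ d} = Σ_{|σ| ≤ d} f̂(σ) χ_σ` of `f`. -/
noncomputable def lowPart {Ω : Type} [Fintype Ω] {q n : ℕ} [NeZero q] (ν : Ω → ℝ)
    (χ : Fin q → Ω → ℂ) (f : (Fin n → Ω) → ℂ) (d : ℕ) : (Fin n → Ω) → ℂ :=
  fun x => ∑ σ ∈ Finset.univ.filter (fun σ : Fin n → Fin q => suppCard σ ≤ d),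
    fCoeff ν χ f σ * ∏ j, χ (σ j) (x j)

/-!
Since `⟨·, …, ·⟩_μ` is multilinear, the difference `⟨f_1, …, f_k⟩_μ − ⟨f_1^{≤d}, …, f_k^{≤d}⟩_μ`
telescopes into the `k` hybrid terms `⟨f_1, …, f_{i-1}, f_i^{>d}, f_{i+1}^{≤d}, …, f_k^{≤d}⟩_μ`.
Hölder's inequality for the `k`-fold product under `μ^{⊗n}` bounds such a term by the product of the
`k`-norms of its entries, each row of `X` being distributed as `μ_i^{⊗n}`; the `i`-th entry
contributes at most `ε`, and every other entry at most `1 + ε`, by Minkowski's inequality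
`‖f^{≤d}‖_k ≤ ‖f‖_k + ‖f^{>d}‖_k`.
-/

open scoped ENNReal

theorem prod_ite_eq_mul_pow {ι M : Type*} [Fintype ι] [DecidableEq ι] [CommMonoid M]
    (i : ι) (a b : M) :
    ∏ j, (if j = i then a else b) = a * b ^ (Fintype.card ι - 1) := by
  simp [Finset.prod_ite, Finset.filter_ne', Finset.filter_eq']

theorem prod_le_inv_card_mul_sum_pow {ι : Type*} [Fintype ι] [Nonempty ι] {b : ι → ℝ}
    (hb : ∀ i, 0 ≤ b i) :
    ∏ i, b i ≤ (Fintype.card ι : ℝ)⁻¹ * ∑ i, b i ^ Fintype.card ι := by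
  set p := Fintype.card ι
  have hp : p ≠ 0 := Fintype.card_ne_zero
  have amgm := Real.geom_mean_le_arith_mean_weighted Finset.univ (fun _ => (p : ℝ)⁻¹)
    (fun i => b i ^ p) (fun _ _ => by positivity) (by simp [p, hp])
    fun i _ => pow_nonneg (hb i) p
  simp only [Real.pow_rpow_inv_natCast (hb _) hp] at amgm
  rwa [Finset.mul_sum]

theorem sum_mul_prod_le_prod_rpow_inv {ι X : Type*} [Fintype ι] [Nonempty ι] [Fintype X]
    {w : X → ℝ} (hw : ∀ x, 0 ≤ w x) {a : ι → X → ℝ} (ha : ∀ i x, 0 ≤ a i x) :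
    ∑ x, w x * ∏ i, a i x ≤
      ∏ i, (∑ x, w x * a i x ^ Fintype.card ι) ^ (Fintype.card ι : ℝ)⁻¹ := by
  set p := Fintype.card ι
  have hp : p ≠ 0 := Fintype.card_ne_zero
  set T : ι → ℝ := fun i => ∑ x, w x * a i x ^ p
  have hT : ∀ i, 0 ≤ T i := fun i =>
    Finset.sum_nonneg fun x _ => mul_nonneg (hw x) (pow_nonneg (ha i x) p)
  by_cases hT0 : ∃ i, T i = 0
  · obtain ⟨i, hi⟩ := hT0
    have hvanish : ∀ x, w x * ∏ i, a i x = 0 := fun x => by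
      have := (Finset.sum_eq_zero_iff_of_nonneg fun x _ =>
        mul_nonneg (hw x) (pow_nonneg (ha i x) p)).1 hi x (mem_univ x)
      rcases mul_eq_zero.1 this with hwx | hax
      · rw [hwx, zero_mul]
      · rw [Finset.prod_eq_zero (mem_univ i) (pow_eq_zero_iff hp |>.1 hax), mul_zero]
    rw [Finset.sum_eq_zero fun x _ => hvanish x]
    exact Finset.prod_nonneg fun i _ => Real.rpow_nonneg (hT i) _
  push Not at hT0
  set S : ι → ℝ := fun i => T i ^ (p : ℝ)⁻¹
  have hS : ∀ i, 0 < S i := fun i => Real.rpow_pos_of_pos ((hT i).lt_of_ne' (hT0 i)) _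
  have hSp : ∀ i, S i ^ p = T i := fun i => Real.rpow_inv_natCast_pow (hT i) hp
  -- normalise each `a i` by `S i` and apply AM-GM pointwise
  calc ∑ x, w x * ∏ i, a i x
      = (∏ i, S i) * ∑ x, w x * ∏ i, (a i x / S i) := by
        rw [Finset.mul_sum]
        refine Finset.sum_congr rfl fun x _ => ?_
        rw [Finset.prod_div_distrib, mul_left_comm, mul_div_cancel₀ _
          (Finset.prod_pos fun i _ => hS i).ne']
    _ ≤ (∏ i, S i) * ∑ x, w x * ((p : ℝ)⁻¹ * ∑ i, (a i x / S i) ^ p) := by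
        gcongr with x
        · exact Finset.prod_nonneg fun i _ => (hS i).le
        · exact hw x
        · exact prod_le_inv_card_mul_sum_pow fun i => div_nonneg (ha i x) (hS i).le
    _ = (∏ i, S i) * ((p : ℝ)⁻¹ * ∑ i, T i / S i ^ p) := by
        simp only [T, div_pow, Finset.sum_div, Finset.mul_sum]
        rw [Finset.sum_comm]
        exact Finset.sum_congr rfl fun i _ => Finset.sum_congr rfl fun x _ => by ring
    _ = ∏ i, S i := by
        simp_rw [hSp, div_self (hT0 _)]
        simp [p, hp]

theorem sum_prod_mul_comp_eq_sum_prod_fiber_mul {α β R : Type*} [Fintype α] [Fintype β]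
    [DecidableEq β] [CommSemiring R] {n : ℕ} (μ : α → R) (π : α → β) (h : (Fin n → β) → R) :
    ∑ X : Fin n → α, (∏ j, μ (X j)) * h (fun j => π (X j)) =
      ∑ x : Fin n → β, (∏ j, ∑ y, if π y = x j then μ y else 0) * h x := by
  simp_rw [Fintype.prod_sum, Finset.sum_mul]
  rw [Finset.sum_comm]
  refine Finset.sum_congr rfl fun X _ => ?_
  simp_rw [Finset.prod_ite_zero, Finset.mem_univ, true_implies, ite_mul, zero_mul, ← funext_iff]
  rw [Finset.sum_ite_eq]
  simp

section LkNorm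

variable {Ω : Type} [Fintype Ω] {n : ℕ} {ν : Ω → ℝ}

theorem lkNorm_nonneg (hν : ∀ a, 0 ≤ ν a) (k : ℕ) (f : (Fin n → Ω) → ℂ) :
    0 ≤ lkNorm ν k f :=
  Real.rpow_nonneg (Finset.sum_nonneg fun x _ =>
    mul_nonneg (Finset.prod_nonneg fun j _ => hν (x j)) (by positivity)) _

theorem lkNorm_eq_norm_toLp (hν : ∀ a, 0 ≤ ν a) {k : ℕ} (hk : k ≠ 0) (f : (Fin n → Ω) → ℂ) :
    lkNorm ν k f = ‖WithLp.toLp (k : ℝ≥0∞)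
      fun x => (((∏ j, ν (x j)) ^ (k : ℝ)⁻¹ : ℝ) : ℂ) * f x‖ := by
  have hw : ∀ x : Fin n → Ω, 0 ≤ ∏ j, ν (x j) := fun x => Finset.prod_nonneg fun j _ => hν (x j)
  rw [PiLp.norm_eq_sum (by simp [Nat.pos_of_ne_zero hk]), lkNorm]
  simp only [ENNReal.toReal_natCast, one_div, norm_mul, Complex.norm_real, Real.norm_eq_abs]
  congr 1
  refine Finset.sum_congr rfl fun x _ => ?_
  rw [abs_of_nonneg (Real.rpow_nonneg (hw x) _), Real.mul_rpow (Real.rpow_nonneg (hw x) _)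
    (norm_nonneg _), Real.rpow_natCast, Real.rpow_natCast, Real.rpow_inv_natCast_pow (hw x) hk]

theorem lkNorm_sub_le (hν : ∀ a, 0 ≤ ν a) {k : ℕ} (hk : 1 ≤ k) (f g : (Fin n → Ω) → ℂ) :
    lkNorm ν k (fun x => f x - g x) ≤ lkNorm ν k f + lkNorm ν k g := by
  have : Fact (1 ≤ (k : ℝ≥0∞)) := ⟨by exact_mod_cast hk⟩
  simp only [lkNorm_eq_norm_toLp hν (Nat.one_le_iff_ne_zero.1 hk), mul_sub]
  exact (norm_sub_le _ _).trans_eq' (congrArg norm (WithLp.toLp_sub _ _ _))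

end LkNorm

section NoiseProd

variable {k n : ℕ} {Ω : Fin k → Type} [∀ i, Fintype (Ω i)] [∀ i, DecidableEq (Ω i)]

theorem marg_nonneg {μ : (∀ i, Ω i) → ℝ} (hμ : ∀ x, 0 ≤ μ x) (i : Fin k) (a : Ω i) :
    0 ≤ marg μ i a :=
  Finset.sum_nonneg fun x _ => by split_ifs <;> simp [hμ x]

noncomputable def noiseProdMultilinear (μ : (∀ i, Ω i) → ℝ) :
    MultilinearMap ℂ (fun i => (Fin n → Ω i) → ℂ) ℂ :=
  ∑ X : Fin n → ∀ i, Ω i, (∏ j, (μ (X j) : ℂ)) •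
    (MultilinearMap.mkPiAlgebra ℂ (Fin k) ℂ).compLinearMap fun i => LinearMap.proj fun j => X j i

theorem noiseProdMultilinear_apply (μ : (∀ i, Ω i) → ℝ) (f : ∀ i, (Fin n → Ω i) → ℂ) :
    noiseProdMultilinear μ f = noiseProd μ f := by
  simp [noiseProdMultilinear, noiseProd]

theorem noiseProd_sub_noiseProd_eq_sum (μ : (∀ i, Ω i) → ℝ) (f g : ∀ i, (Fin n → Ω i) → ℂ) :
    noiseProd μ f - noiseProd μ g = ∑ i, noiseProd μ
      (fun j => if j < i then f j else if i = j then f j - g j else g j) := by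
  simpa [noiseProdMultilinear_apply] using
    (noiseProdMultilinear μ).map_sub_map_piecewise f g Finset.univ

theorem norm_noiseProd_le_prod_lkNorm [NeZero k] {μ : (∀ i, Ω i) → ℝ} (hμ : ∀ x, 0 ≤ μ x)
    (g : ∀ i, (Fin n → Ω i) → ℂ) :
    ‖noiseProd μ g‖ ≤ ∏ i, lkNorm (marg μ i) k (g i) := by
  have hW : ∀ X : Fin n → ∀ i, Ω i, 0 ≤ ∏ j, μ (X j) :=
    fun X => Finset.prod_nonneg fun j _ => hμ (X j)
  calc ‖noiseProd μ g‖
        ≤ ∑ X : Fin n → ∀ i, Ω i, (∏ j, μ (X j)) * ∏ i, ‖g i fun j => X j i‖ := by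
        refine (norm_sum_le _ _).trans_eq (Finset.sum_congr rfl fun X _ => ?_)
        simp [norm_prod, abs_of_nonneg (hμ _)]
    _ ≤ ∏ i, (∑ X : Fin n → ∀ i, Ω i,
          (∏ j, μ (X j)) * ‖g i fun j => X j i‖ ^ k) ^ (k : ℝ)⁻¹ := by
        simpa using sum_mul_prod_le_prod_rpow_inv hW fun i X => norm_nonneg (g i fun j => X j i)
    _ = ∏ i, lkNorm (marg μ i) k (g i) := by
        refine Finset.prod_congr rfl fun i _ => ?_
        rw [lkNorm, sum_prod_mul_comp_eq_sum_prod_fiber_mul μ (fun y => y i) fun x => ‖g i x‖ ^ k]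
        rfl

end NoiseProd

theorem noise_correlation_holder_truncation_general
    {k n q : ℕ} [NeZero q]
    (Ω : Fin k → Type) [∀ i, Fintype (Ω i)] [∀ i, DecidableEq (Ω i)]
    (μ : (∀ i, Ω i) → ℝ)
    (hμ0 : ∀ x, 0 ≤ μ x)
    (χ : ∀ i, Fin q → Ω i → ℂ)
    (f : ∀ i, (Fin n → Ω i) → ℂ)
    (d : ℕ) (ε : ℝ)
    (hfk : ∀ i, lkNorm (marg μ i) k (f i) ≤ 1)
    (hhigh : ∀ i, lkNorm (marg μ i) k
      (fun x => f i x - lowPart (marg μ i) (χ i) (f i) d x) ≤ ε) :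
    ‖noiseProd μ f -
        noiseProd μ (fun i => lowPart (marg μ i) (χ i) (f i) d)‖ ≤
      (k : ℝ) * ε * (1 + ε) ^ (k - 1) := by
  set L := fun i => lowPart (marg μ i) (χ i) (f i) d
  have hν := marg_nonneg hμ0
  have hL : ∀ i : Fin k, lkNorm (marg μ i) k (L i) ≤ 1 + ε := fun i =>
    calc lkNorm (marg μ i) k (L i)
        = lkNorm (marg μ i) k (fun x => f i x - (f i x - L i x)) := by simp only [sub_sub_cancel]
      _ ≤ 1 + ε := (lkNorm_sub_le (hν i) i.pos _ _).trans (add_le_add (hfk i) (hhigh i))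
  have hterm : ∀ i,
      ‖noiseProd μ fun j => if j < i then f j else if i = j then f j - L j else L j‖ ≤
        ε * (1 + ε) ^ (k - 1) := fun i => by
    have : NeZero k := ⟨i.pos.ne'⟩
    have hε : 0 ≤ ε := (lkNorm_nonneg (hν i) _ _).trans (hhigh i)
    calc _ ≤ _ := norm_noiseProd_le_prod_lkNorm hμ0 _
      _ ≤ ∏ j, if j = i then ε else 1 + ε := by
          refine Finset.prod_le_prod (fun j _ => lkNorm_nonneg (hν j) _ _) fun j _ => ?_
          rcases lt_trichotomy j i with hji | rfl | hij
          · rw [if_pos hji, if_neg hji.ne]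
            exact (hfk j).trans (by linarith)
          · rw [if_neg (lt_irrefl j), if_pos rfl, if_pos rfl]
            exact hhigh j
          · rw [if_neg hij.not_gt, if_neg hij.ne, if_neg hij.ne']
            exact hL j
      _ = ε * (1 + ε) ^ (k - 1) := by rw [prod_ite_eq_mul_pow, Fintype.card_fin]
  rw [noiseProd_sub_noiseProd_eq_sum]
  calc _ ≤ ∑ _i : Fin k, ε * (1 + ε) ^ (k - 1) := norm_sum_le_of_le _ fun i _ => hterm i
    _ = _ := by simp [mul_assoc]

/-- **Proposition (Hölder truncation).**  Let `μ` be a probability distribution on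
`Ω_1 × ⋯ × Ω_k` with full-support marginals, and `f_1, …, f_k` functions with
`‖f_i‖_k ≤ 1` and `‖f_i^{>d}‖_k ≤ ε`.  Then
`|⟨f_1, …, f_k⟩_μ − ⟨f_1^{≤d}, …, f_k^{≤d}⟩_μ| ≤ k·ε·(1+ε)^{k-1}`, where
`f^{>d} = f − f^{≤d}`. -/
theorem noise_correlation_holder_truncation
    {k n q : ℕ} (hk : 1 ≤ k) [NeZero q]
    (Ω : Fin k → Type) [∀ i, Fintype (Ω i)] [∀ i, DecidableEq (Ω i)]
    (hcard : ∀ i, Fintype.card (Ω i) = q)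
    (μ : (∀ i, Ω i) → ℝ)
    (hμ0 : ∀ x, 0 ≤ μ x) (hμ1 : ∑ x : ∀ i, Ω i, μ x = 1)
    (hfull : ∀ i a, 0 < marg μ i a)
    (χ : ∀ i, Fin q → Ω i → ℂ)
    (hχ0 : ∀ i, χ i 0 = fun _ => 1)
    (hχorth : ∀ i (s t : Fin q),
      ∑ a : Ω i, (marg μ i a : ℂ) * (χ i s a * conj (χ i t a)) = if s = t then 1 else 0)
    (f : ∀ i, (Fin n → Ω i) → ℂ)
    (d : ℕ) (ε : ℝ) (hε : 0 < ε)
    (hfk : ∀ i, lkNorm (marg μ i) k (f i) ≤ 1)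
    (hhigh : ∀ i, lkNorm (marg μ i) k
      (fun x => f i x - lowPart (marg μ i) (χ i) (f i) d x) ≤ ε) :
    ‖noiseProd μ f -
        noiseProd μ (fun i => lowPart (marg μ i) (χ i) (f i) d)‖ ≤
      (k : ℝ) * ε * (1 + ε) ^ (k - 1) :=
  noise_correlation_holder_truncation_general Ω μ hμ0 χ f d ε hfk hhigh
end
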